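/- arXiv:1703.05432 — 5 statements merged into one kernel-verified Lean document; each statement's English description precedes it below -/
import Mathlib

section
/- The generalized super W-algebra 𝔏 is a Lie superalgebra: the super-bracket defined on the basis satisfies super skew-symmetry and the super Jacobi identity. -/
open Finsupp

/-- Basis of the generalized super W-algebra 𝔏 (indices range over ℝ;
the actual algebra 𝔏 has indices restricted to Γ resp. s+Γ, see `good`). -/
inductive BasisL : Type
  | L : ℝ → BasisL
  | I : ℝ → BasisL
  | G : ℝ → BasisL
  | H : ℝ → BasisL

noncomputable instance : DecidableEq BasisL := Classical.decEq _

/-- The ambient free ℂ-module on the basis. -/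
abbrev LL : Type := BasisL →₀ ℂ
/-- Model for 𝔏 ⊗ 𝔏 : free module on pairs of basis elements. -/
abbrev VV : Type := (BasisL × BasisL) →₀ ℂ
/-- Model for 𝔏 ⊗ 𝔏 ⊗ 𝔏. -/
abbrev WW : Type := (BasisL × BasisL × BasisL) →₀ ℂ

noncomputable def bL (p : ℝ) : LL := Finsupp.single (BasisL.L p) 1
noncomputable def bI (p : ℝ) : LL := Finsupp.single (BasisL.I p) 1
noncomputable def bG (r : ℝ) : LL := Finsupp.single (BasisL.G r) 1
noncomputable def bH (r : ℝ) : LL := Finsupp.single (BasisL.H r) 1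

/-- Parity (0 = even, 1 = odd). -/
def pN : BasisL → ℕ
  | BasisL.L _ => 0
  | BasisL.I _ => 0
  | BasisL.G _ => 1
  | BasisL.H _ => 1

/-- Z_s-degree of a basis element. -/
def degB : BasisL → ℝ
  | BasisL.L p => p
  | BasisL.I p => p
  | BasisL.G r => r
  | BasisL.H r => r

/-- Membership of a basis element in the actual algebra 𝔏 :
L_p, I_p for p ∈ Γ and G_r, H_r for r ∈ s + Γ. -/
def good (Γ : AddSubgroup ℝ) (s : ℝ) : BasisL → Prop
  | BasisL.L p => p ∈ Γ
  | BasisL.I p => p ∈ Γ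
  | BasisL.G r => r - s ∈ Γ
  | BasisL.H r => r - s ∈ Γ

/-- The super-bracket on basis elements (extended by super skew-symmetry). -/
noncomputable def bb : BasisL → BasisL → LL
  | BasisL.L p, BasisL.L q => ((p - q : ℝ) : ℂ) • bL (p + q)
  | BasisL.L p, BasisL.I q => ((p - q : ℝ) : ℂ) • bI (p + q)
  | BasisL.I p, BasisL.L q => ((p - q : ℝ) : ℂ) • bI (p + q)
  | BasisL.L p, BasisL.G r => ((p / 2 - r : ℝ) : ℂ) • bG (p + r)
  | BasisL.G r, BasisL.L p => ((-(p / 2 - r) : ℝ) : ℂ) • bG (p + r)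
  | BasisL.L p, BasisL.H r => ((p / 2 - r : ℝ) : ℂ) • bH (p + r)
  | BasisL.H r, BasisL.L p => ((-(p / 2 - r) : ℝ) : ℂ) • bH (p + r)
  | BasisL.G r, BasisL.G t => bI (r + t)
  | BasisL.I p, BasisL.G r => ((p - 2 * r : ℝ) : ℂ) • bH (p + r)
  | BasisL.G r, BasisL.I p => ((-(p - 2 * r) : ℝ) : ℂ) • bH (p + r)
  | _, _ => 0

/-- The super-bracket, extended bilinearly. -/
noncomputable def br (x y : LL) : LL :=
  x.sum fun a ca => y.sum fun b cb => (ca * cb) • bb a b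

/-- u ⊗ b for u ∈ 𝔏, b a basis element. -/
noncomputable def tenL (u : LL) (b : BasisL) : VV :=
  u.sum fun a ca => Finsupp.single (a, b) ca

/-- a ⊗ u for a a basis element, u ∈ 𝔏. -/
noncomputable def tenR (a : BasisL) (u : LL) : VV :=
  u.sum fun b cb => Finsupp.single (a, b) cb

/-- Super adjoint diagonal action of a basis element on a ⊗ b :
c ∘ (a ⊗ b) = [c,a] ⊗ b + (−1)^{[c][a]} a ⊗ [c,b]. -/
noncomputable def actB (c a b : BasisL) : VV :=
  tenL (bb c a) b + ((-1 : ℂ) ^ (pN c * pN a)) • tenR a (bb c b)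

/-- Super adjoint diagonal action of x ∈ 𝔏 on u ∈ 𝔏 ⊗ 𝔏. -/
noncomputable def act (x : LL) (u : VV) : VV :=
  x.sum fun c cc => u.sum fun ab cab => (cc * cab) • actB c ab.1 ab.2

/-- The super-twist τ(a ⊗ b) = (−1)^{[a][b]} b ⊗ a. -/
noncomputable def tauV (u : VV) : VV :=
  u.sum fun ab c => (((-1 : ℂ) ^ (pN ab.1 * pN ab.2)) * c) • Finsupp.single (ab.2, ab.1) (1 : ℂ)

noncomputable def t1 (u : LL) (b c : BasisL) : WW :=
  u.sum fun a ca => Finsupp.single (a, b, c) ca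
noncomputable def t2 (a : BasisL) (u : LL) (c : BasisL) : WW :=
  u.sum fun b cb => Finsupp.single (a, b, c) cb
noncomputable def t3 (a b : BasisL) (u : LL) : WW :=
  u.sum fun c cc => Finsupp.single (a, b, c) cc
noncomputable def t23 (a : BasisL) (u : VV) : WW :=
  u.sum fun bc x => Finsupp.single (a, bc.1, bc.2) x

/-- c(r) = [r¹²,r¹³] + [r¹²,r²³] + [r¹³,r²³] ∈ 𝔏⊗𝔏⊗𝔏. -/
noncomputable def cYB (r : VV) : WW :=
  r.sum fun ab x => r.sum fun ab' y =>
    (x * y) •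
      (((-1 : ℂ) ^ (pN ab'.1 * pN ab.2)) • t1 (bb ab.1 ab'.1) ab.2 ab'.2
        + t2 ab.1 (bb ab.2 ab'.1) ab'.2
        + ((-1 : ℂ) ^ (pN ab'.1 * pN ab.2)) • t3 ab.1 ab'.1 (bb ab.2 ab'.2))

/-- Super adjoint diagonal action of a basis element on a ⊗ b ⊗ c. -/
noncomputable def act3B (d a b c : BasisL) : WW :=
  t1 (bb d a) b c + ((-1 : ℂ) ^ (pN d * pN a)) • t2 a (bb d b) c
    + ((-1 : ℂ) ^ (pN d * (pN a + pN b))) • t3 a b (bb d c)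

/-- Super adjoint diagonal action of x ∈ 𝔏 on 𝔏⊗𝔏⊗𝔏. -/
noncomputable def act3 (x : LL) (u : WW) : WW :=
  x.sum fun d cd => u.sum fun abc cu => (cd * cu) • act3B d abc.1 abc.2.1 abc.2.2

/-- The super-cyclic map ξ(a⊗b⊗c) = (−1)^{[a]([b]+[c])} b⊗c⊗a. -/
noncomputable def xiW (u : WW) : WW :=
  u.sum fun abc x =>
    (((-1 : ℂ) ^ (pN abc.1 * (pN abc.2.1 + pN abc.2.2))) * x) •
      Finsupp.single (abc.2.1, abc.2.2, abc.1) (1 : ℂ)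

/-- (1 ⊗ Δ) applied to an element of 𝔏⊗𝔏. -/
noncomputable def oneTensor (D : LL →ₗ[ℂ] VV) (u : VV) : WW :=
  u.sum fun ab c => c • t23 ab.1 (D (Finsupp.single ab.2 1))

/-- x ∈ 𝔏 (support consists of good basis elements). -/
def inL (Γ : AddSubgroup ℝ) (s : ℝ) (x : LL) : Prop :=
  ∀ a ∈ x.support, good Γ s a

/-- u ∈ 𝔏 ⊗ 𝔏. -/
def inV (Γ : AddSubgroup ℝ) (s : ℝ) (u : VV) : Prop :=
  ∀ ab ∈ u.support, good Γ s ab.1 ∧ good Γ s ab.2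

/-- x ∈ 𝔏_p, the homogeneous component of degree p. -/
def inComp (Γ : AddSubgroup ℝ) (s : ℝ) (p : ℝ) (x : LL) : Prop :=
  ∀ a ∈ x.support, good Γ s a ∧ degB a = p

/-- u ∈ 𝔙_r = ⊕_{p+q=r} 𝔏_p ⊗ 𝔏_q. -/
def inCompV (Γ : AddSubgroup ℝ) (s : ℝ) (r : ℝ) (u : VV) : Prop :=
  ∀ ab ∈ u.support, good Γ s ab.1 ∧ good Γ s ab.2 ∧ degB ab.1 + degB ab.2 = r

/-- x is ℤ₂-homogeneous of parity i. -/
def IsHomogP (x : LL) (i : ℕ) : Prop :=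
  ∀ a ∈ x.support, pN a % 2 = i % 2

/-- u ∈ 𝔏⊗𝔏 is ℤ₂-homogeneous of parity i. -/
def IsHomogVP (u : VV) (i : ℕ) : Prop :=
  ∀ ab ∈ u.support, (pN ab.1 + pN ab.2) % 2 = i % 2

/-- d : 𝔏 → 𝔏⊗𝔏 is a homogeneous derivation of parity ι (for the super
adjoint diagonal action):
d([x,y]) = (−1)^{[d][x]} x∘d(y) − (−1)^{[y]([d]+[x])} y∘d(x). -/
def IsDer (Γ : AddSubgroup ℝ) (s : ℝ) (ι : ℕ) (d : LL →ₗ[ℂ] VV) : Prop :=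
  (∀ x, inL Γ s x → inV Γ s (d x)) ∧
  (∀ (i : ℕ) (x : LL), inL Γ s x → IsHomogP x i → IsHomogVP (d x) (i + ι)) ∧
  ∀ (i j : ℕ) (x y : LL), inL Γ s x → inL Γ s y → IsHomogP x i → IsHomogP y j →
    d (br x y)
      = ((-1 : ℂ) ^ (ι * i)) • act x (d y) - ((-1 : ℂ) ^ (j * (ι + i))) • act y (d x)

/-- d has degree t : d(𝔏_p) ⊆ 𝔙_{p+t}. -/
def HasDeg (Γ : AddSubgroup ℝ) (s : ℝ) (t : ℝ) (d : LL →ₗ[ℂ] VV) : Prop :=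
  ∀ (p : ℝ) (x : LL), inComp Γ s p x → inCompV Γ s (p + t) (d x)

lemma br_ss (a b : BasisL) : br (Finsupp.single a 1) (Finsupp.single b 1) = bb a b := by
  simp [br, Finsupp.sum_single_index]

lemma br_zero_left (y : LL) : br 0 y = 0 := by simp [br]

lemma br_zero_right (x : LL) : br x 0 = 0 := by simp [br]

lemma br_smul_left (k : ℂ) (x y : LL) : br (k • x) y = k • br x y := by
  unfold br
  rw [Finsupp.sum_smul_index' (by simp)]
  rw [Finsupp.smul_sum]
  refine Finsupp.sum_congr fun a _ => ?_
  rw [Finsupp.smul_sum]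
  refine Finsupp.sum_congr fun b _ => ?_
  rw [smul_smul]; congr 1; simp [smul_eq_mul]; ring

lemma br_smul_right (k : ℂ) (x y : LL) : br x (k • y) = k • br x y := by
  unfold br
  rw [Finsupp.smul_sum]
  refine Finsupp.sum_congr fun a _ => ?_
  rw [Finsupp.sum_smul_index' (by simp), Finsupp.smul_sum]
  refine Finsupp.sum_congr fun b _ => ?_
  rw [smul_smul]; congr 1; simp [smul_eq_mul]; ring

/-- 𝔏 is a Lie superalgebra: on its basis, the super-bracket
satisfies super skew-symmetry and the super Jacobi identity. -/
theorem stmt0 (Γ : AddSubgroup ℝ) (hΓ : Γ ≠ ⊥) (s : ℝ) (hs : 2 * s ∈ Γ)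
    (a b c : BasisL) (ha : good Γ s a) (hb : good Γ s b) (hc : good Γ s c) :
    bb a b = -(((-1 : ℂ) ^ (pN a * pN b)) • bb b a) ∧
    br (Finsupp.single a 1) (br (Finsupp.single b 1) (Finsupp.single c 1))
      = br (br (Finsupp.single a 1) (Finsupp.single b 1)) (Finsupp.single c 1)
        + ((-1 : ℂ) ^ (pN a * pN b)) •
            br (Finsupp.single b 1) (br (Finsupp.single a 1) (Finsupp.single c 1)) := by
  constructor
  · cases a <;> cases b <;>
      (simp only [bb, bL, bI, bG, bH, pN] <;> push_cast <;> ring_nf <;>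
        first
          | rfl
          | module)
  · cases a <;> cases b <;> cases c <;>
      (simp only [bb, bL, bI, bG, bH, pN, br_ss, br_smul_left, br_smul_right,
          br_zero_left, br_zero_right, smul_smul, smul_zero, zero_smul, mul_zero, zero_mul,
          add_zero, zero_add, pow_zero, pow_one, one_smul, mul_one, one_mul] <;>
        push_cast <;> ring_nf <;>
        first
          | rfl
          | module)
end

section
/- If x ∈ 𝔏 satisfies [L_{εm}, x] = 0 for infinitely many integers m > 0, then x = 0. Likewise if [L_{εm}, x] = 0 for infinitely many m < 0, then x = 0. -/
open Finsupp

/-- Shift map on basis elements induced by bracketing with L_p. -/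
noncomputable def shF (p : ℝ) : BasisL → BasisL
  | BasisL.L q => BasisL.L (p + q)
  | BasisL.I q => BasisL.I (p + q)
  | BasisL.G r => BasisL.G (p + r)
  | BasisL.H r => BasisL.H (p + r)

/-- Coefficient appearing in [L_p, a]. -/
noncomputable def ccF (p : ℝ) : BasisL → ℝ
  | BasisL.L q => p - q
  | BasisL.I q => p - q
  | BasisL.G r => p / 2 - r
  | BasisL.H r => p / 2 - r

/-- The value of p making the coefficient vanish. -/
noncomputable def vvF : BasisL → ℝ
  | BasisL.L q => q
  | BasisL.I q => q
  | BasisL.G r => 2 * r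
  | BasisL.H r => 2 * r

lemma bb_L_eq (p : ℝ) (a : BasisL) :
    bb (BasisL.L p) a = ((ccF p a : ℝ) : ℂ) • Finsupp.single (shF p a) 1 := by
  cases a <;> simp [bb, ccF, shF, bL, bI, bG, bH, Finsupp.smul_single]

lemma shF_inj (p : ℝ) : Function.Injective (shF p) := by
  intro a b hab
  cases a <;> cases b <;> simp_all [shF]

lemma ccF_zero {p : ℝ} {a : BasisL} (h : ccF p a = 0) : p = vvF a := by
  cases a <;> simp [ccF, vvF] at * <;> linarith

lemma key_coeff (p : ℝ) (x : LL) (hbr : br (bL p) x = 0)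
    (a0 : BasisL) (ha0 : a0 ∈ x.support) : ccF p a0 = 0 := by
  have h1 : br (bL p) x = x.sum fun b cb => ((1 : ℂ) * cb) • bb (BasisL.L p) b := by
    rw [br, bL, Finsupp.sum_single_index]
    simp [Finsupp.sum]
  have h2 := congrArg (fun f : LL => f (shF p a0)) hbr
  rw [h1] at h2
  simp only [Finsupp.sum, Finsupp.finset_sum_apply, Finsupp.smul_apply, one_mul] at h2
  have h3 : ∀ b ∈ x.support, b ≠ a0 →
      x b • (bb (BasisL.L p) b) (shF p a0) = 0 := by
    intro b _ hb
    rw [bb_L_eq]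
    have : shF p b ≠ shF p a0 := fun hc => hb (shF_inj p hc)
    simp [Finsupp.single_apply, this]
  rw [Finset.sum_eq_single a0 h3 (by intro hns; exact absurd ha0 hns)] at h2
  rw [bb_L_eq] at h2
  simp only [Finsupp.smul_apply, Finsupp.single_apply, if_pos rfl, smul_eq_mul,
    mul_one] at h2
  have hx0 : x a0 ≠ 0 := Finsupp.mem_support_iff.mp ha0
  have : (ccF p a0 : ℂ) = 0 := by
    rcases mul_eq_zero.mp h2 with h | h
    · exact absurd h hx0
    · simpa using h
  exact_mod_cast this

/-- if x ∈ 𝔏 satisfies [L_{εm}, x] = 0 for infinitely many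
integers m > 0, or for infinitely many m < 0, then x = 0. -/
theorem stmt6 (Γ : AddSubgroup ℝ) (hΓ : Γ ≠ ⊥) (s : ℝ) (hs : 2 * s ∈ Γ)
    (ε : ℝ) (hε : ε ∈ Γ) (hεpos : 0 < ε)
    (x : LL) (hx : inL Γ s x)
    (h : {m : ℤ | 0 < m ∧ br (bL (ε * m)) x = 0}.Infinite ∨
         {m : ℤ | m < 0 ∧ br (bL (ε * m)) x = 0}.Infinite) :
    x = 0 := by
  by_contra hne
  obtain ⟨a0, ha0⟩ : x.support.Nonempty := Finsupp.support_nonempty_iff.mpr hne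
  have hεne : ε ≠ 0 := ne_of_gt hεpos
  have hkey : ∀ m : ℤ, br (bL (ε * m)) x = 0 → (m : ℝ) = vvF a0 / ε := by
    intro m hm
    have h0 := key_coeff (ε * m) x hm a0 ha0
    have h1 : ε * m = vvF a0 := ccF_zero h0
    field_simp
    linarith [h1]
  have hfin : {m : ℤ | (m : ℝ) = vvF a0 / ε}.Finite := by
    apply Set.Subsingleton.finite
    intro m1 h1 m2 h2
    exact_mod_cast h1.trans h2.symm
  rcases h with hS | hS
  · exact hS (Set.Finite.subset hfin (fun m hm => hkey m hm.2))
  · exact hS (Set.Finite.subset hfin (fun m hm => hkey m hm.2))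
end

section
/- If u ∈ 𝔏 ⊗ 𝔏 satisfies L_{εm} ∘ u = 0 for infinitely many integers m > 0 (or infinitely many m < 0), then u = 0, where ∘ denotes the super adjoint diagonal action x ∘ (a ⊗ b) = [x,a] ⊗ b + (−1)^{[x][a]} a ⊗ [x,b]. -/
open Finsupp

/-!
`L_p` acts on a basis tensor `a ⊗ b` by `c • (L_p·a) ⊗ b + c' • a ⊗ (L_p·b)`, where `L_p·x` is `x`
with its index moved by `p`. Give `a ⊗ b` the weight `2 deg a + deg b`. For `p > 0`, take a tensor
`a₀ ⊗ b₀` of maximal weight in the support of `u`: the coefficient of `(L_p·a₀) ⊗ b₀` in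
`L_p ∘ u` can only come from `a₀ ⊗ b₀` itself, since the other candidate has weight raised by `p`.
So `L_p ∘ u = 0` forces the structure constant of `[L_p, a₀]` to vanish, which happens for
a single `p`. Hence only one `m > 0` can satisfy `L_{εm} ∘ u = 0`; for `m < 0` use minimal weight.
-/

namespace BasisL

noncomputable def shift (p : ℝ) : BasisL → BasisL
  | L q => L (p + q)
  | I q => I (p + q)
  | G r => G (p + r)
  | H r => H (p + r)

noncomputable def adLCoeff (p : ℝ) : BasisL → ℝ
  | L q => p - q
  | I q => p - q
  | G r => p / 2 - r
  | H r => p / 2 - r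

@[simp]
lemma shift_neg_shift (p : ℝ) (a : BasisL) : shift (-p) (shift p a) = a := by
  cases a <;> simp [shift]

@[simp]
lemma shift_shift_neg (p : ℝ) (a : BasisL) : shift p (shift (-p) a) = a := by
  simpa using shift_neg_shift (-p) a

lemma shift_eq_iff {p : ℝ} {a b : BasisL} : shift p a = b ↔ a = shift (-p) b := by
  constructor <;> rintro rfl <;> simp

lemma degB_shift (p : ℝ) (a : BasisL) : degB (shift p a) = p + degB a := by
  cases a <;> simp [shift, degB]

lemma subsingleton_setOf_adLCoeff_eq_zero (a : BasisL) :
    {p : ℝ | adLCoeff p a = 0}.Subsingleton := by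
  intro p hp q hq
  cases a <;> simp only [Set.mem_ofPred_eq, adLCoeff] at hp hq <;> linarith

lemma bb_L (p : ℝ) (a : BasisL) : bb (L p) a = Finsupp.single (shift p a) (adLCoeff p a : ℂ) := by
  cases a <;> simp [bb, shift, adLCoeff, bL, bI, bG, bH, Finsupp.smul_single]

end BasisL

open BasisL

lemma tenL_single (a : BasisL) (c : ℂ) (b : BasisL) :
    tenL (Finsupp.single a c) b = Finsupp.single (a, b) c :=
  Finsupp.sum_single_index (Finsupp.single_zero _)

lemma tenR_single (a b : BasisL) (c : ℂ) :
    tenR a (Finsupp.single b c) = Finsupp.single (a, b) c :=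
  Finsupp.sum_single_index (Finsupp.single_zero _)

lemma act_bL (p : ℝ) (u : VV) :
    act (bL p) u = u.sum fun ab c =>
      Finsupp.single (shift p ab.1, ab.2) (adLCoeff p ab.1 * c)
        + Finsupp.single (ab.1, shift p ab.2) (adLCoeff p ab.2 * c) := by
  rw [act, bL, Finsupp.sum_single_index (by simp)]
  refine Finsupp.sum_congr fun ab _ => ?_
  simp [actB, bb_L, tenL_single, tenR_single, pN, Finsupp.smul_single, mul_comm]

lemma act_bL_apply (p : ℝ) (u : VV) (a b : BasisL) :
    act (bL p) u (a, b) =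
      adLCoeff p (shift (-p) a) * u (shift (-p) a, b)
        + adLCoeff p (shift (-p) b) * u (a, shift (-p) b) := by
  have hfst (x : BasisL × BasisL) : (shift p x.1, x.2) = (a, b) ↔ x = (shift (-p) a, b) := by
    rw [Prod.ext_iff, Prod.ext_iff, shift_eq_iff]
  have hsnd (x : BasisL × BasisL) : (x.1, shift p x.2) = (a, b) ↔ x = (a, shift (-p) b) := by
    rw [Prod.ext_iff, Prod.ext_iff, shift_eq_iff]
  simp only [act_bL, Finsupp.finsetSum_apply, Finsupp.sum, Finsupp.add_apply,
    Finsupp.single_apply, Finset.sum_add_distrib, hfst, hsnd]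
  rw [Finset.sum_ite_eq', Finset.sum_ite_eq']
  congr 1 <;> split_ifs with h <;> simp_all

lemma adLCoeff_eq_zero_of_act_bL_eq_zero {p : ℝ} {u : VV} (hact : act (bL p) u = 0)
    {a b : BasisL} (hab : (a, b) ∈ u.support) (hout : (shift p a, shift (-p) b) ∉ u.support) :
    adLCoeff p a = 0 := by
  have := congrArg (· (shift p a, b)) hact
  simp only [act_bL_apply, shift_neg_shift, Finsupp.notMem_support_iff.1 hout, mul_zero,
    add_zero, Finsupp.coe_zero, Pi.zero_apply, mul_eq_zero, Complex.ofReal_eq_zero] at this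
  exact this.resolve_right (Finsupp.mem_support_iff.1 hab)

def pairWeight (ab : BasisL × BasisL) : ℝ := 2 * degB ab.1 + degB ab.2

lemma pairWeight_shift (p : ℝ) (a b : BasisL) :
    pairWeight (shift p a, shift (-p) b) = pairWeight (a, b) + p := by
  simp only [pairWeight, degB_shift]
  ring

lemma subsingleton_setOf_pos_act_bL_eq_zero {u : VV} (hu : u ≠ 0) :
    {p : ℝ | 0 < p ∧ act (bL p) u = 0}.Subsingleton := by
  obtain ⟨⟨a, b⟩, hab, hmax⟩ :=
    u.support.exists_max_image pairWeight (Finsupp.support_nonempty_iff.2 hu)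
  refine (subsingleton_setOf_adLCoeff_eq_zero a).anti fun p ⟨hp, hact⟩ => ?_
  refine adLCoeff_eq_zero_of_act_bL_eq_zero hact hab fun hout => ?_
  linarith [pairWeight_shift p a b, hmax _ hout]

lemma subsingleton_setOf_neg_act_bL_eq_zero {u : VV} (hu : u ≠ 0) :
    {p : ℝ | p < 0 ∧ act (bL p) u = 0}.Subsingleton := by
  obtain ⟨⟨a, b⟩, hab, hmin⟩ :=
    u.support.exists_min_image pairWeight (Finsupp.support_nonempty_iff.2 hu)
  refine (subsingleton_setOf_adLCoeff_eq_zero a).anti fun p ⟨hp, hact⟩ => ?_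
  refine adLCoeff_eq_zero_of_act_bL_eq_zero hact hab fun hout => ?_
  linarith [pairWeight_shift p a b, hmin _ hout]

theorem stmt7_general
    (ε : ℝ) (hεpos : 0 < ε)
    (u : VV)
    (h : {m : ℤ | 0 < m ∧ act (bL (ε * m)) u = 0}.Infinite ∨
         {m : ℤ | m < 0 ∧ act (bL (ε * m)) u = 0}.Infinite) :
    u = 0 := by
  by_contra hu
  have hinj : Function.Injective fun m : ℤ => ε * m :=
    (mul_right_injective₀ hεpos.ne').comp Int.cast_injective
  rcases h with h | h
  · refine h (((subsingleton_setOf_pos_act_bL_eq_zero hu).finite.preimage hinj.injOn).subset ?_)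
    exact fun m hm => ⟨mul_pos hεpos (Int.cast_pos.2 hm.1), hm.2⟩
  · refine h (((subsingleton_setOf_neg_act_bL_eq_zero hu).finite.preimage hinj.injOn).subset ?_)
    exact fun m hm => ⟨mul_neg_of_pos_of_neg hεpos (Int.cast_lt_zero.2 hm.1), hm.2⟩

/-- if u ∈ 𝔏 ⊗ 𝔏 satisfies L_{εm} ∘ u = 0 for infinitely many
integers m > 0, or for infinitely many m < 0, then u = 0. -/
theorem stmt7 (Γ : AddSubgroup ℝ) (hΓ : Γ ≠ ⊥) (s : ℝ) (hs : 2 * s ∈ Γ)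
    (ε : ℝ) (hε : ε ∈ Γ) (hεpos : 0 < ε)
    (u : VV) (hu : inV Γ s u)
    (h : {m : ℤ | 0 < m ∧ act (bL (ε * m)) u = 0}.Infinite ∨
         {m : ℤ | m < 0 ∧ act (bL (ε * m)) u = 0}.Infinite) :
    u = 0 :=
  stmt7_general ε hεpos u h
end

section
/- An element r ∈ Im(1⊗1 − τ) ⊆ 𝔏 ⊗ 𝔏 satisfies the classical Yang–Baxter equation c(r) := [r^{12}, r^{13}] + [r^{12}, r^{23}] + [r^{13}, r^{23}] = 0 if and only if it satisfies the modified Yang–Baxter equation x ∘ c(r) = 0 for all x ∈ 𝔏. -/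
open Finsupp

/-- Shift of a basis element by `q` (the effect of `ad L_q` up to scalar). -/
noncomputable def shiftB (q : ℝ) : BasisL → BasisL
  | BasisL.L p => BasisL.L (q + p)
  | BasisL.I p => BasisL.I (q + p)
  | BasisL.G r => BasisL.G (q + r)
  | BasisL.H r => BasisL.H (q + r)

/-- The scalar with which `ad L_q` acts. -/
noncomputable def coefB (q : ℝ) : BasisL → ℝ
  | BasisL.L p => q - p
  | BasisL.I p => q - p
  | BasisL.G r => q / 2 - r
  | BasisL.H r => q / 2 - r

lemma bb_L (q : ℝ) (a : BasisL) :
    bb (BasisL.L q) a = ((coefB q a : ℝ) : ℂ) • Finsupp.single (shiftB q a) (1 : ℂ) := by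
  cases a <;> simp [bb, bL, bI, bG, bH, shiftB, coefB, add_comm]

lemma degB_shiftB (q : ℝ) (a : BasisL) : degB (shiftB q a) = q + degB a := by
  cases a <;> simp [shiftB, degB]

lemma shiftB_inj (q : ℝ) {a a' : BasisL} (h : shiftB q a = shiftB q a') : a = a' := by
  cases a <;> cases a' <;> simp_all [shiftB]

lemma shiftB_ne (q : ℝ) (hq : q ≠ 0) (a : BasisL) : shiftB q a ≠ a := by
  intro h
  have := degB_shiftB q a
  rw [h] at this
  exact hq (by linarith)

lemma coefB_ne_zero (q : ℝ) (a : BasisL) (h1 : q ≠ degB a) (h2 : q ≠ 2 * degB a) :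
    coefB q a ≠ 0 := by
  cases a <;> simp only [coefB, degB] at * <;> intro hc <;> [skip; skip; skip; skip] <;>
    first
      | exact h1 (by linarith)
      | exact h2 (by linarith)

lemma t1_smul_single (c : ℂ) (a b c' : BasisL) :
    t1 (c • Finsupp.single a (1 : ℂ)) b c' = c • Finsupp.single (a, b, c') (1 : ℂ) := by
  simp [t1, Finsupp.smul_single, Finsupp.sum_single_index, Finsupp.smul_single']

lemma t2_smul_single (c : ℂ) (a b c' : BasisL) :
    t2 a (c • Finsupp.single b (1 : ℂ)) c' = c • Finsupp.single (a, b, c') (1 : ℂ) := by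
  simp [t2, Finsupp.smul_single, Finsupp.sum_single_index, Finsupp.smul_single']

lemma t3_smul_single (c : ℂ) (a b c' : BasisL) :
    t3 a b (c • Finsupp.single c' (1 : ℂ)) = c • Finsupp.single (a, b, c') (1 : ℂ) := by
  simp [t3, Finsupp.smul_single, Finsupp.sum_single_index, Finsupp.smul_single']

lemma act3B_L (q : ℝ) (a b c : BasisL) :
    act3B (BasisL.L q) a b c
      = ((coefB q a : ℝ) : ℂ) • Finsupp.single (shiftB q a, b, c) (1 : ℂ)
        + ((coefB q b : ℝ) : ℂ) • Finsupp.single (a, shiftB q b, c) (1 : ℂ)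
        + ((coefB q c : ℝ) : ℂ) • Finsupp.single (a, b, shiftB q c) (1 : ℂ) := by
  simp [act3B, bb_L, pN, t1, t2, t3, Finsupp.smul_single', Finsupp.sum_single_index]

lemma act3_L (q : ℝ) (w : WW) :
    act3 (Finsupp.single (BasisL.L q) (1 : ℂ)) w
      = w.sum fun t ct => ct •
          (((coefB q t.1 : ℝ) : ℂ) • Finsupp.single (shiftB q t.1, t.2.1, t.2.2) (1 : ℂ)
            + ((coefB q t.2.1 : ℝ) : ℂ) • Finsupp.single (t.1, shiftB q t.2.1, t.2.2) (1 : ℂ)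
            + ((coefB q t.2.2 : ℝ) : ℂ) • Finsupp.single (t.1, t.2.1, shiftB q t.2.2) (1 : ℂ)) := by
  unfold act3
  rw [Finsupp.sum_single_index]
  · refine Finsupp.sum_congr fun t ht => ?_
    rw [one_mul, act3B_L]
  · simp

/-- The centralizer argument: if `L_q ∘ w = 0` for all `q ∈ Γ`, then `w = 0`. -/
lemma key_central (Γ : AddSubgroup ℝ) (hΓ : Γ ≠ ⊥) (w : WW)
    (h : ∀ q : ℝ, q ∈ Γ → act3 (Finsupp.single (BasisL.L q) (1 : ℂ)) w = 0) : w = 0 := by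
  by_contra hw
  obtain ⟨t0, ht0⟩ := Finsupp.support_nonempty_iff.mpr hw
  -- the finite set of "bad" values of q
  set S : Finset ℝ :=
    (w.support.image fun t => degB t.1 - degB t0.1) ∪ {degB t0.1, 2 * degB t0.1} with hS
  -- Γ is infinite
  obtain ⟨g, hgΓ, hg⟩ : ∃ g ∈ Γ, g ≠ 0 := by
    by_contra hc
    push_neg at hc
    refine hΓ ?_
    ext x
    simp only [AddSubgroup.mem_bot]
    exact ⟨fun hx => hc x hx, fun hx => hx ▸ zero_mem Γ⟩
  have hinf : (Γ : Set ℝ).Infinite := by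
    apply Set.infinite_of_injective_forall_mem (f := fun n : ℕ => (n : ℝ) * g)
    · intro m n hmn
      have : (m : ℝ) = n := by
        have := mul_right_cancel₀ hg hmn
        exact_mod_cast this
      exact_mod_cast this
    · intro n
      have : (n : ℕ) • g ∈ Γ := AddSubgroup.nsmul_mem Γ hgΓ n
      simpa [nsmul_eq_mul] using this
  obtain ⟨q, hqΓ, hqS⟩ : ∃ q ∈ Γ, q ∉ S := by
    obtain ⟨q, hq1, hq2⟩ := ((hinf.diff S.finite_toSet).nonempty)
    exact ⟨q, hq1, hq2⟩
  have hq0 : q ≠ 0 := by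
    intro h0
    apply hqS
    rw [hS]
    apply Finset.mem_union_left
    exact Finset.mem_image.mpr ⟨t0, ht0, by rw [h0]; ring⟩
  have hqd : ∀ t ∈ w.support, q ≠ degB t.1 - degB t0.1 := by
    intro t ht he
    exact hqS (Finset.mem_union_left _ (Finset.mem_image.mpr ⟨t, ht, he.symm⟩))
  have hq1 : q ≠ degB t0.1 := fun he =>
    hqS (Finset.mem_union_right _ (by simp [he]))
  have hq2 : q ≠ 2 * degB t0.1 := fun he =>
    hqS (Finset.mem_union_right _ (by simp [he]))
  -- evaluate the equation at the point P
  set P : BasisL × BasisL × BasisL := (shiftB q t0.1, t0.2.1, t0.2.2) with hP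
  have heq := h q hqΓ
  have heval : (act3 (Finsupp.single (BasisL.L q) (1 : ℂ)) w) P = 0 := by rw [heq]; rfl
  rw [act3_L, Finsupp.sum_apply] at heval
  have hterm : ∀ t ∈ w.support,
      (w t •
        (((coefB q t.1 : ℝ) : ℂ) • Finsupp.single (shiftB q t.1, t.2.1, t.2.2) (1 : ℂ)
          + ((coefB q t.2.1 : ℝ) : ℂ) • Finsupp.single (t.1, shiftB q t.2.1, t.2.2) (1 : ℂ)
          + ((coefB q t.2.2 : ℝ) : ℂ) • Finsupp.single (t.1, t.2.1, shiftB q t.2.2) (1 : ℂ))) P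
        = if t = t0 then w t0 * ((coefB q t0.1 : ℝ) : ℂ) else 0 := by
    intro t ht
    by_cases hte : t = t0
    · subst hte
      have h2 : ((t.1, shiftB q t.2.1, t.2.2) : BasisL × BasisL × BasisL)
          ≠ (shiftB q t.1, t.2.1, t.2.2) := fun hcon =>
        shiftB_ne q hq0 t.1 (congrArg Prod.fst hcon).symm
      have h3 : ((t.1, t.2.1, shiftB q t.2.2) : BasisL × BasisL × BasisL)
          ≠ (shiftB q t.1, t.2.1, t.2.2) := fun hcon =>
        shiftB_ne q hq0 t.1 (congrArg Prod.fst hcon).symm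
      simp [hP, Finsupp.single_apply, h2, h3, mul_comm]
    · have h1 : ((shiftB q t.1, t.2.1, t.2.2) : BasisL × BasisL × BasisL)
          ≠ (shiftB q t0.1, t0.2.1, t0.2.2) := by
        intro hcon
        apply hte
        have ha := shiftB_inj q (congrArg Prod.fst hcon)
        have hb : t.2.1 = t0.2.1 := congrArg (fun x => x.2.1) hcon
        have hc : t.2.2 = t0.2.2 := congrArg (fun x => x.2.2) hcon
        exact Prod.ext ha (Prod.ext hb hc)
      have h2 : ((t.1, shiftB q t.2.1, t.2.2) : BasisL × BasisL × BasisL)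
          ≠ (shiftB q t0.1, t0.2.1, t0.2.2) := by
        intro hcon
        exact hqd t ht (by
          have hh : t.1 = shiftB q t0.1 := congrArg Prod.fst hcon
          rw [hh, degB_shiftB]; ring)
      have h3 : ((t.1, t.2.1, shiftB q t.2.2) : BasisL × BasisL × BasisL)
          ≠ (shiftB q t0.1, t0.2.1, t0.2.2) := by
        intro hcon
        exact hqd t ht (by
          have hh : t.1 = shiftB q t0.1 := congrArg Prod.fst hcon
          rw [hh, degB_shiftB]; ring)
      simp [hP, Finsupp.single_apply, h1, h2, h3, hte]
  rw [Finsupp.sum] at heval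
  rw [Finset.sum_congr rfl hterm] at heval
  rw [Finset.sum_ite_eq' w.support t0
    (fun _ => w t0 * ((coefB q t0.1 : ℝ) : ℂ)), if_pos ht0] at heval
  have hco : coefB q t0.1 ≠ 0 := coefB_ne_zero q t0.1 hq1 hq2
  have : w t0 = 0 := by
    rcases mul_eq_zero.mp heval with h' | h'
    · exact h'
    · exact absurd (by exact_mod_cast h') hco
  exact (Finsupp.mem_support_iff.mp ht0) this

lemma act3_zero (x : LL) : act3 x (0 : WW) = 0 := by
  simp [act3]

/-- r ∈ Im(1⊗1 − τ) ⊆ 𝔏⊗𝔏 satisfies the classical Yang–Baxter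
equation c(r) = 0 iff it satisfies the modified Yang–Baxter equation
x ∘ c(r) = 0 for all x ∈ 𝔏. -/
theorem stmt8 (Γ : AddSubgroup ℝ) (hΓ : Γ ≠ ⊥) (s : ℝ) (hs : 2 * s ∈ Γ)
    (r : VV) (hr : inV Γ s r) (hskew : ∃ u : VV, r = u - tauV u) :
    cYB r = 0 ↔ ∀ x : LL, inL Γ s x → act3 x (cYB r) = 0 := by
  constructor
  · intro h x _
    rw [h]
    exact act3_zero x
  · intro h
    apply key_central Γ hΓ
    intro q hq
    apply h
    intro a ha
    rw [Finsupp.support_single_ne_zero _ one_ne_zero] at ha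
    simp only [Finset.mem_singleton] at ha
    subst ha
    exact hq
end

section
/- For every nonzero t ∈ Γ, every homogeneous derivation d of degree t from 𝔏 to 𝔏 ⊗ 𝔏 is inner; more precisely, for an even such derivation d_t, d_t(x) = x ∘ (−d_t(L_0)/t) for all x ∈ 𝔏. -/
open Finsupp

/-
Bracketing with `L₀` multiplies an element of degree `p` by `-p`, and `L₀` acts on `𝔙_r` as `-r`.
Applying a derivation `d` of degree `t` to `[L₀, a] = -p a` for a basis element `a` of degree `p`
therefore gives `-p d(a) = -(p + t) d(a) ∓ a ∘ d(L₀)`, i.e. `t d(a) = ∓ a ∘ d(L₀)`. Since `t ≠ 0`,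
`d(a) = ± a ∘ (-d(L₀)/t)`, and linearity extends this from basis elements to all of `𝔏`.
-/

lemma forall_mem_support_single_one {P : BasisL → Prop} {a : BasisL} (ha : P a) :
    ∀ b ∈ (Finsupp.single a (1 : ℂ)).support, P b := by
  simpa [Finsupp.support_single _ one_ne_zero] using ha

lemma inL_single {Γ : AddSubgroup ℝ} {s : ℝ} {a : BasisL} (ha : good Γ s a) :
    inL Γ s (Finsupp.single a 1) :=
  forall_mem_support_single_one ha

lemma inComp_single {Γ : AddSubgroup ℝ} {s : ℝ} {a : BasisL} (ha : good Γ s a) :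
    inComp Γ s (degB a) (Finsupp.single a 1) :=
  forall_mem_support_single_one ⟨ha, rfl⟩

lemma isHomogP_single (a : BasisL) : IsHomogP (Finsupp.single a 1) (pN a) :=
  forall_mem_support_single_one rfl

lemma inL_bL_zero (Γ : AddSubgroup ℝ) (s : ℝ) : inL Γ s (bL 0) :=
  inL_single (zero_mem Γ)

lemma bb_L_zero (a : BasisL) :
    bb (BasisL.L 0) a = ((-degB a : ℝ) : ℂ) • Finsupp.single a 1 := by
  cases a <;> simp [bb, bL, bI, bG, bH, degB]

lemma br_bL_zero_single (a : BasisL) :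
    br (bL 0) (Finsupp.single a 1) = ((-degB a : ℝ) : ℂ) • Finsupp.single a 1 := by
  simp [br, bL, bb_L_zero]

lemma actB_L_zero (a b : BasisL) :
    actB (BasisL.L 0) a b = ((-(degB a + degB b) : ℝ) : ℂ) • Finsupp.single (a, b) 1 := by
  simp only [actB, bb_L_zero, pN, tenL, tenR, Nat.zero_mul, pow_zero, one_smul,
    Finsupp.smul_single, smul_eq_mul, mul_one]
  rw [Finsupp.sum_single_index (by simp), Finsupp.sum_single_index (by simp),
    ← Finsupp.single_add]
  push_cast
  ring_nf

lemma act_bL_zero_of_inCompV {Γ : AddSubgroup ℝ} {s r : ℝ} {v : VV} (hv : inCompV Γ s r v) :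
    act (bL 0) v = ((-r : ℝ) : ℂ) • v := by
  rw [act, bL, Finsupp.sum_single_index (by simp)]
  conv_rhs => rw [← Finsupp.sum_single v, Finsupp.smul_sum]
  refine Finsupp.sum_congr fun ab hab => ?_
  rw [one_mul, actB_L_zero, (hv ab hab).2.2]
  simp only [Finsupp.smul_single, smul_eq_mul, mul_one, mul_comm]

lemma act_smul (x : LL) (c : ℂ) (u : VV) : act x (c • u) = c • act x u := by
  simp only [act, Finsupp.smul_sum]
  refine Finsupp.sum_congr fun a _ => ?_
  rw [Finsupp.sum_smul_index' (by simp)]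
  exact Finsupp.sum_congr fun ab _ => by rw [smul_smul, smul_eq_mul]; ring_nf

lemma act_eq_sum_single (x : LL) (u : VV) :
    act x u = x.sum fun a ca => ca • act (Finsupp.single a 1) u := by
  simp only [act, Finsupp.smul_sum]
  refine Finsupp.sum_congr fun a _ => ?_
  rw [Finsupp.sum_single_index (by simp)]
  exact Finsupp.sum_congr fun ab _ => by rw [smul_smul, one_mul]

lemma LinearMap.apply_eq_sum_single {M : Type*} [AddCommGroup M] [Module ℂ M]
    (f : LL →ₗ[ℂ] M) (x : LL) :
    f x = x.sum fun a ca => ca • f (Finsupp.single a 1) := by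
  conv_lhs => rw [← Finsupp.sum_single x, map_finsuppSum]
  exact Finsupp.sum_congr fun a _ => by rw [← map_smul, Finsupp.smul_single_one]

section Derivation

variable {Γ : AddSubgroup ℝ} {s t : ℝ} {ι : ℕ} {d : LL →ₗ[ℂ] VV}

lemma IsDer.apply_single_eq_act (hd : IsDer Γ s ι d) (hdeg : HasDeg Γ s t d) (ht0 : t ≠ 0)
    {a : BasisL} (ha : good Γ s a) :
    d (Finsupp.single a 1)
      = ((-1 : ℂ) ^ (ι * pN a)) • act (Finsupp.single a 1) (((-t⁻¹ : ℝ) : ℂ) • d (bL 0)) := by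
  have hder := hd.2.2 0 (pN a) (bL 0) (Finsupp.single a 1)
    (inL_bL_zero Γ s) (inL_single ha) (isHomogP_single _) (isHomogP_single a)
  rw [br_bL_zero_single, map_smul, act_bL_zero_of_inCompV (hdeg _ _ (inComp_single ha))] at hder
  have htd : (t : ℂ) • d (Finsupp.single a 1)
      = -((-1 : ℂ) ^ (ι * pN a)) • act (Finsupp.single a 1) (d (bL 0)) := by
    push_cast at hder
    simp only [Nat.mul_zero, Nat.add_zero, pow_zero, one_smul, mul_comm (pN a) ι] at hder
    linear_combination (norm := module) hder
  have ht : (t : ℂ) ≠ 0 := Complex.ofReal_ne_zero.mpr ht0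
  calc d (Finsupp.single a 1) = (t : ℂ)⁻¹ • (t : ℂ) • d (Finsupp.single a 1) := by
        rw [smul_smul, inv_mul_cancel₀ ht, one_smul]
    _ = _ := by
        rw [htd, act_smul]
        push_cast
        module

lemma IsDer.apply_eq_smul_act (hd : IsDer Γ s ι d) (hdeg : HasDeg Γ s t d) (ht0 : t ≠ 0)
    {x : LL} (hx : inL Γ s x) {c : ℂ} (hc : ∀ a ∈ x.support, (-1 : ℂ) ^ (ι * pN a) = c) :
    d x = c • act x (((-t⁻¹ : ℝ) : ℂ) • d (bL 0)) := by
  rw [d.apply_eq_sum_single, act_eq_sum_single, Finsupp.smul_sum]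
  refine Finsupp.sum_congr fun a ha => ?_
  rw [hd.apply_single_eq_act hdeg ht0 (hx a ha), hc a ha, smul_comm]

end Derivation

theorem stmt9_general (Γ : AddSubgroup ℝ) (s : ℝ)
    (t : ℝ) (ht0 : t ≠ 0)
    (ι : ℕ) (d : LL →ₗ[ℂ] VV) (hd : IsDer Γ s ι d) (hdeg : HasDeg Γ s t d) :
    (∃ u : VV, inV Γ s u ∧ IsHomogVP u ι ∧
      ∀ (i : ℕ) (x : LL), inL Γ s x → IsHomogP x i →
        d x = ((-1 : ℂ) ^ (ι * i)) • act x u) ∧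
    (ι = 0 → ∀ x : LL, inL Γ s x → d x = act x (((-t⁻¹ : ℝ) : ℂ) • d (bL 0))) := by
  set u : VV := ((-t⁻¹ : ℝ) : ℂ) • d (bL 0)
  have hsupp : u.support ⊆ (d (bL 0)).support := Finsupp.support_smul
  have hL₀ := inL_bL_zero Γ s
  refine ⟨⟨u, fun ab hab => hd.1 _ hL₀ ab (hsupp hab), fun ab hab => ?_, fun i x hx hi => ?_⟩,
    fun hι x hx => ?_⟩
  · simpa using hd.2.1 0 _ hL₀ (isHomogP_single _) ab (hsupp hab)
  · refine hd.apply_eq_smul_act hdeg ht0 hx fun a ha => ?_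
    rw [neg_one_pow_eq_pow_mod_two, Nat.mul_mod, hi a ha, ← Nat.mul_mod,
      ← neg_one_pow_eq_pow_mod_two]
  · subst hι
    rw [← one_smul ℂ (act x u)]
    exact hd.apply_eq_smul_act hdeg ht0 hx fun a _ => by rw [Nat.zero_mul, pow_zero]

/-- case s ∈ Γ: for 0 ≠ t ∈ Γ, every homogeneous derivation of
degree t from 𝔏 to 𝔏⊗𝔏 is inner; more precisely, an even such derivation
d_t satisfies d_t(x) = x ∘ (−d_t(L_0)/t) for all x ∈ 𝔏. -/
theorem stmt9 (Γ : AddSubgroup ℝ) (hΓ : Γ ≠ ⊥) (s : ℝ) (hs : s ∈ Γ)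
    (t : ℝ) (ht : t ∈ Γ) (ht0 : t ≠ 0)
    (ι : ℕ) (d : LL →ₗ[ℂ] VV) (hd : IsDer Γ s ι d) (hdeg : HasDeg Γ s t d) :
    (∃ u : VV, inV Γ s u ∧ IsHomogVP u ι ∧
      ∀ (i : ℕ) (x : LL), inL Γ s x → IsHomogP x i →
        d x = ((-1 : ℂ) ^ (ι * i)) • act x u) ∧
    (ι = 0 → ∀ x : LL, inL Γ s x → d x = act x (((-t⁻¹ : ℝ) : ℂ) • d (bL 0))) :=
  stmt9_general Γ s t ht0 ι d hd hdeg
end
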